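/- Let 0<β<1, 0≤λ<1 and z0∈D with z0≠0. Then the point -2(1-β) log(1-λ z0) is an interior point of V(z0,λ,β); more precisely, the open set {log F'_{a,λ}(z0) : |a|<1} is contained in V(z0,λ,β) and contains -2(1-β) log(1-λ z0) = log F'_{0,λ}(z0) as an interior point. -/

import Mathlib

/-!
For `‖a‖ ≤ 1` the extremal function `F = F_{a,λ}` lies in `F(λ,β)`: with `N = 1 + λaz` and
`P = z(az + λ)` the denominator `1 + λ(a-1)z - az²` equals `N - P`, and
`1 + z F''(z)/F'(z) = β + (1-β)(N + P)/(N - P)`, whose real part exceeds `β` because `|P| < |N|`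
on the disk. So `a ↦ log F'_{a,λ}(z₀)` maps the unit disk into `V(z₀,λ,β)`.

Differentiating under the integral sign, this map is holomorphic on the disk `|a| < 1/|z₀|`,
which contains `a = 1`. There the `λ`-terms of the denominator cancel and the derivative is
`(1-β)(1-λ²)z₀²/(1-z₀²) ≠ 0`, so the map is not constant and, by the open mapping
theorem, the image of the unit disk is open. At `a = 0` the integrand is `2(1-β)λ/(1-λξ)`, with
primitive `-2(1-β) log(1-λξ)`.
-/

open Complex Set MeasureTheory

noncomputable section

/-- The open unit disk in the complex plane. -/
def unitDisk : Set ℂ := {z : ℂ | ‖z‖ < 1}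

/-- Integral of `g` along the segment from `0` to `z0`:
`∫_0^{z0} g(ξ) dξ = ∫_0^1 z0 · g(t z0) dt`. -/
def segInt (g : ℂ → ℂ) (z0 : ℂ) : ℂ :=
  ∫ t in (0:ℝ)..1, z0 * g ((t : ℂ) * z0)

/-- The branch of `log f'` vanishing at the origin, evaluated at `z0`:
`log f'(z0) = ∫_0^{z0} f''(ξ)/f'(ξ) dξ`. -/
def logDerivAt (f : ℂ → ℂ) (z0 : ℂ) : ℂ :=
  segInt (fun ξ => deriv (deriv f) ξ / deriv f ξ) z0

/-- The class `F(λ,β)`: analytic `f` on the unit disk with `f(0)=0`, `f'(0)=1`,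
`f''(0)=2λ(1-β)`, nonvanishing derivative, and `Re(1 + z f''(z)/f'(z)) > β`. -/
def IsInF (lam beta : ℝ) (f : ℂ → ℂ) : Prop :=
  DifferentiableOn ℂ f unitDisk ∧ f 0 = 0 ∧ deriv f 0 = 1 ∧
    deriv (deriv f) 0 = 2 * (lam : ℂ) * (1 - (beta : ℂ)) ∧
    (∀ z ∈ unitDisk, deriv f z ≠ 0) ∧
    (∀ z ∈ unitDisk, beta < (1 + z * deriv (deriv f) z / deriv f z).re)

/-- The region of variability `V(z0,λ,β) = {log f'(z0) : f ∈ F(λ,β)}`. -/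
def V (z0 : ℂ) (lam beta : ℝ) : Set ℂ :=
  {w : ℂ | ∃ f : ℂ → ℂ, IsInF lam beta f ∧ logDerivAt f z0 = w}

/-- `log F'_{a,λ}(z0) = ∫_0^{z0} 2(1-β)(aξ+λ)/(1+λ(a-1)ξ-aξ²) dξ`. -/
def logFext (a : ℂ) (lam beta : ℝ) (z0 : ℂ) : ℂ :=
  segInt (fun ξ => 2 * (1 - (beta : ℂ)) * (a * ξ + (lam : ℂ)) /
    (1 + (lam : ℂ) * (a - 1) * ξ - a * ξ ^ 2)) z0

/-- The extremal function `F_{a,λ}(z) = ∫_0^z exp(log F'_{a,λ}(ξ)) dξ`. -/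
def Fext (a : ℂ) (lam beta : ℝ) (z : ℂ) : ℂ :=
  segInt (fun ξ => Complex.exp (logFext a lam beta ξ)) z

open Metric intervalIntegral Filter Topology

lemma norm_add_ofReal_lt_norm_one_add_ofReal_mul {l : ℝ} (hl : |l| < 1) {u : ℂ}
    (hu : ‖u‖ < 1) : ‖u + l‖ < ‖1 + l * u‖ := by
  have hgap : normSq (1 + l * u) - normSq (u + l) = (1 - l ^ 2) * (1 - normSq u) := by
    simp only [normSq_apply, add_re, add_im, mul_re, mul_im, ofReal_re, ofReal_im, one_re, one_im]
    ring
  have hu' : normSq u < 1 := by rw [normSq_eq_norm_sq]; nlinarith [norm_nonneg u]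
  have hl' : l ^ 2 < 1 := by nlinarith [abs_nonneg l, sq_abs l]
  have : normSq (u + l) < normSq (1 + l * u) := by nlinarith
  rw [normSq_eq_norm_sq, normSq_eq_norm_sq] at this
  exact lt_of_pow_lt_pow_left₀ 2 (norm_nonneg _) this

lemma norm_mul_add_ofReal_lt {l : ℝ} (hl : |l| < 1) {a ξ : ℂ} (haξ : ‖a * ξ‖ < 1)
    (hξ : ‖ξ‖ ≤ 1) : ‖ξ * (a * ξ + l)‖ < ‖1 + l * (a * ξ)‖ :=
  calc ‖ξ * (a * ξ + l)‖ ≤ 1 * ‖a * ξ + l‖ := by rw [norm_mul]; gcongr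
    _ < ‖1 + l * (a * ξ)‖ := by
      rw [one_mul]; exact norm_add_ofReal_lt_norm_one_add_ofReal_mul hl haξ

lemma re_add_div_sub_pos {n p : ℂ} (h : ‖p‖ < ‖n‖) : 0 < ((n + p) / (n - p)).re := by
  have hnp : n - p ≠ 0 := fun h0 => h.ne (by rw [sub_eq_zero.1 h0])
  have hnum : (n + p).re * (n - p).re + (n + p).im * (n - p).im = normSq n - normSq p := by
    simp only [normSq_apply, add_re, add_im, sub_re, sub_im]
    ring
  have h' : normSq p < normSq n := by
    rw [normSq_eq_norm_sq, normSq_eq_norm_sq]; gcongr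
  rw [div_re, ← add_div, hnum]
  exact div_pos (by linarith) (normSq_pos.2 hnp)

lemma one_sub_sq_ne_zero {ξ : ℂ} (hξ : ξ ∈ ball (0 : ℂ) 1) : 1 - ξ ^ 2 ≠ 0 := by
  refine sub_ne_zero.2 fun h => ?_
  rw [mem_ball_zero_iff] at hξ
  have h1 : ‖ξ‖ ^ 2 = 1 := by rw [← norm_pow, ← h, norm_one]
  nlinarith [norm_nonneg ξ]

lemma hasDerivAt_intervalIntegral_of_continuousOn {𝕜 E : Type*} [RCLike 𝕜]
    [NormedAddCommGroup E] [NormedSpace ℝ E] [NormedSpace 𝕜 E] {U : Set 𝕜} (hU : IsOpen U)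
    {H H' : 𝕜 → ℝ → E} {a b : ℝ} (hH : ContinuousOn (Function.uncurry H) (U ×ˢ uIcc a b))
    (hH' : ContinuousOn (Function.uncurry H') (U ×ˢ uIcc a b))
    (hderiv : ∀ x ∈ U, ∀ t ∈ uIcc a b, HasDerivAt (H · t) (H' x t) x) {x₀ : 𝕜}
    (hx₀ : x₀ ∈ U) :
    HasDerivAt (fun x => ∫ t in a..b, H x t) (∫ t in a..b, H' x₀ t) x₀ := by
  obtain ⟨ε, hε, hεU⟩ := Metric.isOpen_iff.1 hU x₀ hx₀
  have hK : closedBall x₀ (ε / 2) ⊆ U := (closedBall_subset_ball (half_lt_self hε)).trans hεU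
  have hsection : ∀ {F : 𝕜 → ℝ → E}, ContinuousOn (Function.uncurry F) (U ×ˢ uIcc a b) →
      ∀ x ∈ U, ContinuousOn (F x) (uIcc a b) := fun hF x hx =>
    hF.comp (Continuous.prodMk_right x).continuousOn fun t ht => ⟨hx, ht⟩
  have hmeas : ∀ {F : 𝕜 → ℝ → E}, ContinuousOn (Function.uncurry F) (U ×ˢ uIcc a b) →
      ∀ x ∈ U, AEStronglyMeasurable (F x) (volume.restrict (uIoc a b)) := fun hF x hx =>
    ((hsection hF x hx).mono uIoc_subset_uIcc).aestronglyMeasurable measurableSet_uIoc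
  obtain ⟨C, hC⟩ := ((isCompact_closedBall x₀ (ε / 2)).prod isCompact_uIcc)
    |>.exists_bound_of_continuousOn (hH'.mono (prod_mono hK subset_rfl))
  exact (hasDerivAt_integral_of_dominated_loc_of_deriv_le (bound := fun _ => C)
    (ball_mem_nhds x₀ (half_pos hε))
    (eventually_of_mem (closedBall_mem_nhds x₀ (half_pos hε)) fun x hx => hmeas hH x (hK hx))
    ((hsection hH x₀ hx₀).intervalIntegrable) (hmeas hH' x₀ hx₀)
    (Eventually.of_forall fun t ht x hx =>
      hC (x, t) ⟨ball_subset_closedBall hx, uIoc_subset_uIcc ht⟩)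
    intervalIntegrable_const
    (Eventually.of_forall fun t ht x hx =>
      hderiv x (hK (ball_subset_closedBall hx)) t (uIoc_subset_uIcc ht))).2

lemma isOpen_image_of_deriv_ne_zero {f : ℂ → ℂ} {U s : Set ℂ} (hf : DifferentiableOn ℂ f U)
    (hU : IsOpen U) (hU' : IsPreconnected U) {x₀ : ℂ} (hx₀ : x₀ ∈ U)
    (hf' : deriv f x₀ ≠ 0) (hsU : s ⊆ U) (hs : IsOpen s) : IsOpen (f '' s) := by
  rcases (hf.analyticOnNhd hU).is_constant_or_isOpen hU' with ⟨w, hw⟩ | hopen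
  · refine absurd ?_ hf'
    have hconst : f =ᶠ[𝓝 x₀] fun _ => w := eventually_of_mem (hU.mem_nhds hx₀) hw
    rw [hconst.deriv_eq, deriv_const]
  · exact hopen s hsU hs

section SegmentIntegral

variable {g G : ℂ → ℂ} {r : ℝ} {z : ℂ}

lemma norm_ofReal_mul_le {t : ℝ} (ht : t ∈ uIcc (0 : ℝ) 1) (z : ℂ) :
    ‖(t : ℂ) * z‖ ≤ ‖z‖ := by
  rw [uIcc_of_le zero_le_one] at ht
  rw [norm_mul, norm_real, Real.norm_of_nonneg ht.1]
  exact mul_le_of_le_one_left (norm_nonneg z) ht.2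

lemma ofReal_mul_mem_ball (hz : z ∈ ball (0 : ℂ) r) {t : ℝ} (ht : t ∈ uIcc (0 : ℝ) 1) :
    (t : ℂ) * z ∈ ball (0 : ℂ) r :=
  mem_ball_zero_iff.2 ((norm_ofReal_mul_le ht z).trans_lt (mem_ball_zero_iff.1 hz))

lemma segInt_zero (g : ℂ → ℂ) : segInt g 0 = 0 := by
  simp [segInt]

lemma segInt_eq_sub (hG : ∀ ξ ∈ ball (0 : ℂ) r, HasDerivAt G (g ξ) ξ)
    (hz : z ∈ ball (0 : ℂ) r) : segInt g z = G z - G 0 := by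
  have hG' : DifferentiableOn ℂ G (ball 0 r) := fun ξ hξ =>
    (hG ξ hξ).differentiableAt.differentiableWithinAt
  have hg : ContinuousOn g (ball 0 r) :=
    (hG'.analyticOnNhd isOpen_ball).deriv.continuousOn.congr fun ξ hξ => (hG ξ hξ).deriv.symm
  have hderiv : ∀ t ∈ uIcc (0 : ℝ) 1,
      HasDerivAt (fun s : ℝ => G (s * z)) (z * g (t * z)) t := fun t ht => by
    simpa [mul_comm] using ((hG _ (ofReal_mul_mem_ball hz ht)).comp (t : ℂ)
      ((hasDerivAt_id (t : ℂ)).mul_const z)).comp_ofReal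
  have hint : IntervalIntegrable (fun t : ℝ => z * g (t * z)) volume 0 1 :=
    (continuousOn_const.mul (hg.comp (by fun_prop) fun t ht => ofReal_mul_mem_ball hz ht))
      |>.intervalIntegrable
  rw [segInt, integral_eq_sub_of_hasDerivAt hderiv hint]
  simp

lemma hasDerivAt_segInt (hg : DifferentiableOn ℂ g (ball 0 r)) (hz : z ∈ ball (0 : ℂ) r) :
    HasDerivAt (segInt g) (g z) z := by
  obtain ⟨G, hG⟩ := hg.isExactOn_ball
  have hsegInt : (fun w => G w - G 0) =ᶠ[𝓝 z] segInt g :=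
    eventually_of_mem (isOpen_ball.mem_nhds hz) fun w hw => (segInt_eq_sub hG hw).symm
  exact ((hG z hz).sub_const _).congr_of_eventuallyEq hsegInt.symm

lemma deriv_segInt_exp_segInt (hg : DifferentiableOn ℂ g (ball 0 r))
    (hz : z ∈ ball (0 : ℂ) r) :
    deriv (segInt fun ξ => exp (segInt g ξ)) z = exp (segInt g z) :=
  (hasDerivAt_segInt (fun _ hξ =>
    (hasDerivAt_segInt hg hξ).cexp.differentiableAt.differentiableWithinAt) hz).deriv

lemma deriv_deriv_segInt_exp_segInt (hg : DifferentiableOn ℂ g (ball 0 r))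
    (hz : z ∈ ball (0 : ℂ) r) :
    deriv (deriv (segInt fun ξ => exp (segInt g ξ))) z = exp (segInt g z) * g z := by
  have hderiv : deriv (segInt fun ξ => exp (segInt g ξ)) =ᶠ[𝓝 z]
      fun ξ => exp (segInt g ξ) :=
    eventually_of_mem (isOpen_ball.mem_nhds hz) fun _ hξ => deriv_segInt_exp_segInt hg hξ
  rw [hderiv.deriv_eq]
  exact (hasDerivAt_segInt hg hz).cexp.deriv

lemma deriv_deriv_div_deriv_segInt_exp_segInt (hg : DifferentiableOn ℂ g (ball 0 r))
    (hz : z ∈ ball (0 : ℂ) r) :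
    deriv (deriv (segInt fun ξ => exp (segInt g ξ))) z /
      deriv (segInt fun ξ => exp (segInt g ξ)) z = g z := by
  rw [deriv_deriv_segInt_exp_segInt hg hz, deriv_segInt_exp_segInt hg hz,
    mul_div_cancel_left₀ _ (exp_ne_zero _)]

lemma logDerivAt_segInt_exp_segInt (hg : DifferentiableOn ℂ g (ball 0 r))
    (hz : z ∈ ball (0 : ℂ) r) :
    logDerivAt (segInt fun ξ => exp (segInt g ξ)) z = segInt g z :=
  integral_congr fun t ht => by
    simp only [deriv_deriv_div_deriv_segInt_exp_segInt hg (ofReal_mul_mem_ball hz ht)]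

end SegmentIntegral

lemma unitDisk_eq_ball : unitDisk = ball (0 : ℂ) 1 := by
  ext z
  simp [unitDisk]

section Extremal

variable {a ξ z : ℂ} {lam beta : ℝ}

def logFextDeriv (a : ℂ) (lam beta : ℝ) (ξ : ℂ) : ℂ :=
  2 * (1 - (beta : ℂ)) * (a * ξ + (lam : ℂ)) / (1 + (lam : ℂ) * (a - 1) * ξ - a * ξ ^ 2)

lemma logFextDeriv_denom_eq :
    1 + (lam : ℂ) * (a - 1) * ξ - a * ξ ^ 2 = (1 + lam * (a * ξ)) - ξ * (a * ξ + lam) := by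
  ring

lemma logFextDeriv_denom_ne_zero (hl : |lam| < 1) (haξ : ‖a * ξ‖ < 1) (hξ : ‖ξ‖ ≤ 1) :
    1 + (lam : ℂ) * (a - 1) * ξ - a * ξ ^ 2 ≠ 0 := by
  rw [logFextDeriv_denom_eq, sub_ne_zero]
  exact fun h => (norm_mul_add_ofReal_lt hl haξ hξ).ne (by rw [h])

lemma one_add_mul_logFextDeriv (hD : 1 + (lam : ℂ) * (a - 1) * ξ - a * ξ ^ 2 ≠ 0) :
    1 + ξ * logFextDeriv a lam beta ξ = beta + (1 - beta) *
      ((1 + lam * (a * ξ) + ξ * (a * ξ + lam)) / (1 + lam * (a * ξ) - ξ * (a * ξ + lam))) := by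
  set D : ℂ := 1 + (lam : ℂ) * (a - 1) * ξ - a * ξ ^ 2
  calc 1 + ξ * logFextDeriv a lam beta ξ = 1 + 2 * (1 - beta) * (ξ * (a * ξ + lam)) / D := by
        rw [logFextDeriv]; ring
    _ = _ := by
        rw [← logFextDeriv_denom_eq, show (1 + lam * (a * ξ) + ξ * (a * ξ + lam) : ℂ)
          = D + 2 * (ξ * (a * ξ + lam)) by ring, add_div, div_self hD]
        ring

lemma beta_lt_re_one_add_mul_logFextDeriv (hl : |lam| < 1) (hb : beta < 1) (ha : ‖a‖ ≤ 1)
    (hξ : ‖ξ‖ < 1) : beta < (1 + ξ * logFextDeriv a lam beta ξ).re := by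
  have haξ : ‖a * ξ‖ < 1 := by
    rw [norm_mul]; nlinarith [norm_nonneg a, norm_nonneg ξ]
  rw [one_add_mul_logFextDeriv (logFextDeriv_denom_ne_zero hl haξ hξ.le)]
  have hpos := re_add_div_sub_pos (norm_mul_add_ofReal_lt hl haξ hξ.le)
  simp only [add_re, mul_re, ofReal_re, ofReal_im, sub_re, sub_im, one_re, one_im]
  nlinarith

lemma differentiableOn_logFextDeriv (hl : |lam| < 1) (ha : ‖a‖ ≤ 1) :
    DifferentiableOn ℂ (logFextDeriv a lam beta) (ball 0 1) := by
  refine DifferentiableOn.div (by fun_prop) (by fun_prop) fun ξ hξ => ?_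
  rw [mem_ball_zero_iff] at hξ
  refine logFextDeriv_denom_ne_zero hl ?_ hξ.le
  rw [norm_mul]
  nlinarith [norm_nonneg a, norm_nonneg ξ]

lemma isInF_Fext (hl : |lam| < 1) (hb : beta < 1) (ha : ‖a‖ ≤ 1) :
    IsInF lam beta (Fext a lam beta) := by
  have hg := differentiableOn_logFextDeriv (beta := beta) hl ha
  have h0 : (0 : ℂ) ∈ ball (0 : ℂ) 1 := mem_ball_self one_pos
  have hFext : Fext a lam beta = segInt fun ξ => exp (segInt (logFextDeriv a lam beta) ξ) := rfl
  rw [IsInF, unitDisk_eq_ball, hFext]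
  refine ⟨fun z hz => (hasDerivAt_segInt ?_ hz).differentiableAt.differentiableWithinAt,
    segInt_zero _, ?_, ?_, fun z hz => ?_, fun z hz => ?_⟩
  · exact fun ξ hξ => (hasDerivAt_segInt hg hξ).cexp.differentiableAt.differentiableWithinAt
  · rw [deriv_segInt_exp_segInt hg h0, segInt_zero, exp_zero]
  · rw [deriv_deriv_segInt_exp_segInt hg h0, segInt_zero, exp_zero, one_mul, logFextDeriv]
    ring
  · rw [deriv_segInt_exp_segInt hg hz]
    exact exp_ne_zero _
  · rw [mul_div_assoc, deriv_deriv_div_deriv_segInt_exp_segInt hg hz]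
    exact beta_lt_re_one_add_mul_logFextDeriv hl hb ha (mem_ball_zero_iff.1 hz)

lemma logDerivAt_Fext (hl : |lam| < 1) (ha : ‖a‖ ≤ 1) (hz : z ∈ unitDisk) :
    logDerivAt (Fext a lam beta) z = logFext a lam beta z :=
  logDerivAt_segInt_exp_segInt (differentiableOn_logFextDeriv hl ha) (unitDisk_eq_ball ▸ hz)

lemma logFext_zero (hl : |lam| < 1) (hz : z ∈ unitDisk) :
    logFext 0 lam beta z = -2 * (1 - (beta : ℂ)) * log (1 - (lam : ℂ) * z) := by
  have hslit : ∀ ξ ∈ ball (0 : ℂ) 1, 1 - (lam : ℂ) * ξ ∈ slitPlane := fun ξ hξ => by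
    rw [sub_eq_add_neg]
    refine mem_slitPlane_of_norm_lt_one ?_
    rw [norm_neg, norm_mul, norm_real, Real.norm_eq_abs]
    rw [mem_ball_zero_iff] at hξ
    nlinarith [abs_nonneg lam, norm_nonneg ξ]
  have hG : ∀ ξ ∈ ball (0 : ℂ) 1,
      HasDerivAt (fun ξ => -2 * (1 - (beta : ℂ)) * log (1 - lam * ξ))
        (logFextDeriv 0 lam beta ξ) ξ := fun ξ hξ => by
    refine (((((hasDerivAt_id' ξ).const_mul (lam : ℂ)).const_sub 1).clog
      (hslit ξ hξ)).const_mul (-2 * (1 - (beta : ℂ)))).congr_deriv ?_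
    rw [logFextDeriv, show (1 + lam * (0 - 1) * ξ - 0 * ξ ^ 2 : ℂ) = 1 - lam * ξ by ring]
    ring
  change segInt (logFextDeriv 0 lam beta) z = _
  rw [segInt_eq_sub hG (unitDisk_eq_ball ▸ hz)]
  simp

def logFextDerivParamDeriv (a : ℂ) (lam beta : ℝ) (ξ : ℂ) : ℂ :=
  2 * (1 - (beta : ℂ)) * (1 - (lam : ℂ) ^ 2) * ξ /
    (1 + (lam : ℂ) * (a - 1) * ξ - a * ξ ^ 2) ^ 2

lemma hasDerivAt_logFextDeriv_param (hD : 1 + (lam : ℂ) * (a - 1) * ξ - a * ξ ^ 2 ≠ 0) :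
    HasDerivAt (fun a => logFextDeriv a lam beta ξ) (logFextDerivParamDeriv a lam beta ξ) a := by
  have hnum : HasDerivAt (fun a : ℂ => 2 * (1 - (beta : ℂ)) * (a * ξ + lam))
      (2 * (1 - beta) * ξ) a := by
    simpa using (((hasDerivAt_id' a).mul_const ξ).add_const (lam : ℂ)).const_mul
      (2 * (1 - (beta : ℂ)))
  have hden : HasDerivAt (fun a : ℂ => 1 + (lam : ℂ) * (a - 1) * ξ - a * ξ ^ 2)
      (lam * ξ - ξ ^ 2) a := by
    have := ((((hasDerivAt_id' a).sub_const 1).const_mul (lam : ℂ)).mul_const ξ).const_add 1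
    simpa using this.fun_sub ((hasDerivAt_id' a).mul_const (ξ ^ 2))
  refine (hnum.div hden hD).congr_deriv ?_
  rw [logFextDerivParamDeriv]
  congr 1
  ring

lemma hasDerivAt_logFext_param (hl : |lam| < 1) (hz : ‖z‖ < 1) (ha : ‖a‖ * ‖z‖ < 1) :
    HasDerivAt (fun a => logFext a lam beta z)
      (segInt (logFextDerivParamDeriv a lam beta) z) a := by
  set U : Set ℂ := {x | ‖x‖ * ‖z‖ < 1}
  have hD : ∀ p ∈ U ×ˢ uIcc (0 : ℝ) 1,
      1 + (lam : ℂ) * (p.1 - 1) * (p.2 * z) - p.1 * (p.2 * z) ^ 2 ≠ 0 := by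
    rintro ⟨x, t⟩ ⟨hx, ht⟩
    have htz := norm_ofReal_mul_le ht z
    refine logFextDeriv_denom_ne_zero hl ?_ (htz.trans hz.le)
    rw [norm_mul]
    exact (mul_le_mul_of_nonneg_left htz (norm_nonneg x)).trans_lt hx
  exact hasDerivAt_intervalIntegral_of_continuousOn (isOpen_lt (by fun_prop) continuous_const)
    (H := fun x t => z * logFextDeriv x lam beta (t * z))
    (H' := fun x t => z * logFextDerivParamDeriv x lam beta (t * z))
    (continuousOn_const.mul ((by fun_prop : Continuous _).continuousOn.div (by fun_prop) hD))
    (continuousOn_const.mul ((by fun_prop : Continuous _).continuousOn.div (by fun_prop)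
      fun p hp => pow_ne_zero 2 (hD p hp)))
    (fun x hx t ht => (hasDerivAt_logFextDeriv_param (hD (x, t) ⟨hx, ht⟩)).const_mul z) ha

lemma segInt_logFextDerivParamDeriv_one (hz : z ∈ ball (0 : ℂ) 1) :
    segInt (logFextDerivParamDeriv 1 lam beta) z
      = (1 - beta) * (1 - (lam : ℂ) ^ 2) * z ^ 2 / (1 - z ^ 2) := by
  have hG : ∀ ξ ∈ ball (0 : ℂ) 1,
      HasDerivAt (fun ξ => (1 - beta) * (1 - (lam : ℂ) ^ 2) * (1 - ξ ^ 2)⁻¹)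
        (logFextDerivParamDeriv 1 lam beta ξ) ξ := fun ξ hξ => by
    refine ((((hasDerivAt_id' ξ).fun_pow 2).const_sub 1).fun_inv
      (one_sub_sq_ne_zero hξ)).const_mul _ |>.congr_deriv ?_
    rw [logFextDerivParamDeriv, show (1 + lam * (1 - 1) * ξ - 1 * ξ ^ 2 : ℂ) = 1 - ξ ^ 2 by ring]
    ring
  rw [segInt_eq_sub hG hz]
  field_simp [one_sub_sq_ne_zero hz]
  ring

lemma isOpen_image_logFext (hl : |lam| < 1) (hb : beta < 1) (hz : z ∈ unitDisk)
    (hz0 : z ≠ 0) : IsOpen ((fun a => logFext a lam beta z) '' ball 0 1) := by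
  rw [unitDisk_eq_ball, mem_ball_zero_iff] at hz
  have hpos : 0 < ‖z‖ := norm_pos_iff.2 hz0
  have hR : 1 < ‖z‖⁻¹ := (one_lt_inv₀ hpos).2 hz
  have hderiv : ∀ a ∈ ball (0 : ℂ) ‖z‖⁻¹, HasDerivAt (fun a => logFext a lam beta z)
      (segInt (logFextDerivParamDeriv a lam beta) z) a := fun a ha => by
    refine hasDerivAt_logFext_param hl hz ?_
    rw [mem_ball_zero_iff] at ha
    simpa using (lt_inv_mul_iff₀' hpos).1 (by simpa using ha)
  have h1 : (1 : ℂ) ∈ ball (0 : ℂ) ‖z‖⁻¹ := by simpa using hR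
  refine isOpen_image_of_deriv_ne_zero
    (fun a ha => (hderiv a ha).differentiableAt.differentiableWithinAt) isOpen_ball
    (convex_ball _ _).isPreconnected h1 ?_ (ball_subset_ball hR.le) isOpen_ball
  rw [(hderiv 1 h1).deriv, segInt_logFextDerivParamDeriv_one (mem_ball_zero_iff.2 hz)]
  have hb' : (1 - beta : ℂ) ≠ 0 := sub_ne_zero.2 (by exact_mod_cast hb.ne')
  have hl' : (1 - (lam : ℂ) ^ 2) ≠ 0 := sub_ne_zero.2
    (by exact_mod_cast (by nlinarith [sq_abs lam, abs_nonneg lam] : lam ^ 2 < 1).ne')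
  exact div_ne_zero (mul_ne_zero (mul_ne_zero hb' hl') (pow_ne_zero 2 hz0))
    (one_sub_sq_ne_zero (mem_ball_zero_iff.2 hz))

end Extremal

/-- for `0 ≤ λ < 1` and `z0 ∈ D \ {0}`, the set
`{log F'_{a,λ}(z0) : |a| < 1}` is open, is contained in `V(z0,λ,β)`, and contains
`-2(1-β) log(1-λ z0) = log F'_{0,λ}(z0)` as an interior point; in particular
`-2(1-β) log(1-λ z0)` is an interior point of `V(z0,λ,β)`. -/
theorem V_interior_point (beta lam : ℝ) (hbeta : 0 < beta ∧ beta < 1)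
    (hlam : 0 ≤ lam ∧ lam < 1) (z0 : ℂ) (hz0 : z0 ∈ unitDisk) (hz0ne : z0 ≠ 0) :
    IsOpen {w : ℂ | ∃ a : ℂ, ‖a‖ < 1 ∧ logFext a lam beta z0 = w} ∧
    {w : ℂ | ∃ a : ℂ, ‖a‖ < 1 ∧ logFext a lam beta z0 = w} ⊆ V z0 lam beta ∧
    logFext 0 lam beta z0 = -2 * (1 - (beta : ℂ)) * Complex.log (1 - (lam : ℂ) * z0) ∧
    (-2 * (1 - (beta : ℂ)) * Complex.log (1 - (lam : ℂ) * z0))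
      ∈ {w : ℂ | ∃ a : ℂ, ‖a‖ < 1 ∧ logFext a lam beta z0 = w} ∧
    (-2 * (1 - (beta : ℂ)) * Complex.log (1 - (lam : ℂ) * z0)) ∈ interior (V z0 lam beta) := by
  have hl : |lam| < 1 := abs_lt.2 ⟨by linarith [hlam.1], hlam.2⟩
  set S := {w : ℂ | ∃ a : ℂ, ‖a‖ < 1 ∧ logFext a lam beta z0 = w}
  have hS : S = (fun a => logFext a lam beta z0) '' ball 0 1 := by
    ext w
    simp [S]
  have hopen : IsOpen S := hS ▸ isOpen_image_logFext hl hbeta.2 hz0 hz0ne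
  have hsub : S ⊆ V z0 lam beta := by
    rintro _ ⟨a, ha, rfl⟩
    exact ⟨Fext a lam beta, isInF_Fext hl hbeta.2 ha.le, logDerivAt_Fext hl ha.le hz0⟩
  have hzero := logFext_zero (beta := beta) hl hz0
  have hmem : -2 * (1 - (beta : ℂ)) * log (1 - (lam : ℂ) * z0) ∈ S := ⟨0, by simp, hzero⟩
  exact ⟨hopen, hsub, hzero, hmem, interior_mono hsub (hopen.interior_eq.symm ▸ hmem)⟩
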